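/- arXiv:1806.10849 — 3 statements merged into one kernel-verified Lean document; each statement's English description precedes it below -/
import Mathlib

section
/- Let f(z) = Σ_{j≥1} c_j z_j be a linear function with complex coefficients satisfying Σ_{j≥1} |c_j|² < ∞. Then the supremum of |⟨g, f⟩_{L²(𝕋^∞)}| / ‖g‖_{L^∞(𝕋^∞)} over all nonzero analytic polynomials g equals sup_{j≥1} |c_j|. -/
open MeasureTheory Complex Filter
open scoped ENNReal NNReal

noncomputable instance : MeasurableSpace Circle := borel Circle
instance : BorelSpace Circle := ⟨rfl⟩

/-- The countably infinite polytorus `𝕋^∞`. -/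
abbrev Polytorus : Type := ℕ → Circle

/-- The Haar probability measure on a nonempty compact group. -/
noncomputable def haarP (G : Type*) [Group G] [TopologicalSpace G] [IsTopologicalGroup G]
    [CompactSpace G] [Nonempty G] [MeasurableSpace G] [BorelSpace G] : Measure G :=
  Measure.haarMeasure ⊤

/-- The Haar probability measure `μ_∞` on `𝕋^∞`, i.e. the countable product of normalized
Lebesgue arc measures. -/
noncomputable def muInf : Measure Polytorus := haarP Polytorus

instance : IsProbabilityMeasure muInf :=
  ⟨by simpa [muInf, haarP] using
    Measure.haarMeasure_self (K₀ := (⊤ : TopologicalSpace.PositiveCompacts Polytorus))⟩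

/-- The analytic monomial `z ^ α` for a finitely supported multi-index `α`. -/
def monomial (α : ℕ →₀ ℕ) : Polytorus → ℂ := fun z => α.prod fun j n => (z j : ℂ) ^ n

/-- Analytic polynomials on `𝕋^∞`: finite linear combinations of analytic monomials. -/
def IsAnalyticPoly (f : Polytorus → ℂ) : Prop :=
  f ∈ Submodule.span ℂ (Set.range monomial)

/-- The `L²(𝕋^∞)` pairing `⟨f, g⟩ = ∫ f conj(g) dμ_∞`. -/
noncomputable def pairing (f g : Polytorus → ℂ) : ℂ :=
  ∫ z, f z * (starRingEnd ℂ) (g z) ∂muInf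

/-- The dual norm `‖φ‖_{(H^∞)^*}`: the supremum of `|⟨g, φ⟩|/‖g‖_{L^∞}` over all nonzero
analytic polynomials `g`. -/
noncomputable def dualNormInf (φ : Polytorus → ℂ) : ℝ :=
  sSup {t : ℝ | ∃ g : Polytorus → ℂ, IsAnalyticPoly g ∧ g ≠ 0 ∧
    t = ‖pairing g φ‖ / (eLpNorm g ⊤ muInf).toReal}

/-- The `j`-th coordinate function `z ↦ z_j` on `𝕋^∞`. -/
def coordFn (j : ℕ) : Polytorus → ℂ := fun z => (z j : ℂ)

lemma continuous_coordFn (j : ℕ) : Continuous (coordFn j) :=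
  continuous_subtype_val.comp (continuous_apply j)

lemma memℒp_coordFn (j : ℕ) : MemLp (coordFn j) 2 muInf :=
  MemLp.of_bound (continuous_coordFn j).aestronglyMeasurable 1
    (Filter.Eventually.of_forall fun z => by simp [coordFn, Circle.norm_coe])

/-- The linear function `f(z) = Σ_j c_j z_j`, as an element of `L²(𝕋^∞)` (the series
converges in `L²` whenever the coefficients are square-summable). -/
noncomputable def linearFn (c : ℕ → ℂ) : Lp ℂ 2 muInf :=
  ∑' j, c j • ((memℒp_coordFn j).toLp (coordFn j))

/-! For an analytic polynomial `g` put `a_j = ⟨g, z_j⟩`. Orthonormality of the coordinates in `L²`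
gives `⟨g, f⟩ = ∑ conj(c_j) a_j`, so the upper bound follows from `∑ |a_j| ≤ ‖g‖_∞`, and `g = z_j`
attains `|c_j|`. For that inequality (Bohr's trick) rotate by `ζ_j = conj(a_j) / |a_j|` and restrict
`g` to the diagonal `w ↦ (ζ_j w)_j`: the first Taylor coefficient of this one-variable polynomial is
`∑ ζ_j a_j = ∑ |a_j|`, and it is bounded by the sup norm of `g`. -/

open ComplexConjugate InnerProductSpace

instance : Measure.IsMulLeftInvariant muInf := by unfold muInf haarP; infer_instance
instance : Measure.IsOpenPosMeasure muInf := by unfold muInf haarP; infer_instance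

section ContinuousEssSup

variable {X E : Type*} [TopologicalSpace X] [MeasurableSpace X] {μ : Measure X}
  [μ.IsOpenPosMeasure] [NormedAddCommGroup E] {g : X → E}

theorem enorm_le_eLpNorm_top_of_continuous (hg : Continuous g) (x : X) :
    ‖g x‖ₑ ≤ eLpNorm g ⊤ μ := by
  have hclosed : IsClosed {x | ‖g x‖ₑ ≤ eLpNorm g ⊤ μ} := isClosed_le hg.enorm continuous_const
  have hdense : Dense {x | ‖g x‖ₑ ≤ eLpNorm g ⊤ μ} := μ.dense_of_ae ae_le_eLpNormEssSup
  exact Set.eq_univ_iff_forall.1 (hclosed.closure_eq.symm.trans hdense.closure_eq) x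

theorem norm_le_toReal_eLpNorm_top_of_continuous [CompactSpace X] [OpensMeasurableSpace X]
    (hg : Continuous g) (x : X) : ‖g x‖ ≤ (eLpNorm g ⊤ μ).toReal := by
  have hfin := (hg.memLp_top_of_hasCompactSupport (.of_compactSpace g) μ).eLpNorm_ne_top
  rw [← toReal_enorm]
  exact ENNReal.toReal_mono hfin (enorm_le_eLpNorm_top_of_continuous hg x)

end ContinuousEssSup

theorem continuous_monomial (α : ℕ →₀ ℕ) : Continuous (monomial α) :=
  continuous_finsetProd _ fun j _ => (continuous_coordFn j).pow _

theorem monomial_mul (α : ℕ →₀ ℕ) (a z : Polytorus) :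
    monomial α (a * z) = monomial α a * monomial α z := by
  simp only [monomial, Pi.mul_apply, Circle.coe_mul, mul_pow, Finsupp.prod_mul]

theorem norm_monomial (α : ℕ →₀ ℕ) (z : Polytorus) : ‖monomial α z‖ = 1 := by
  simp [monomial, Finsupp.prod, Circle.norm_coe]

theorem monomial_single (j n : ℕ) (z : Polytorus) :
    monomial (Finsupp.single j n) z = (z j : ℂ) ^ n :=
  Finsupp.prod_single_index (pow_zero _)

theorem coordFn_eq_monomial (j : ℕ) : coordFn j = monomial (Finsupp.single j 1) := by
  ext z
  rw [monomial_single, pow_one, coordFn]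

theorem monomial_update_one (α : ℕ →₀ ℕ) (k : ℕ) (w : Circle) :
    monomial α (Function.update 1 k w) = ((w ^ α k : Circle) : ℂ) := by
  rw [monomial, Finsupp.prod, Finset.prod_eq_single k
    (fun j _ hj => by simp [Function.update_of_ne hj])
    (fun hk => by simp [Finsupp.notMem_support_iff.1 hk])]
  simp

theorem monomial_mul_const (α : ℕ →₀ ℕ) (ζ : Polytorus) (w : Circle) :
    monomial α (fun j => ζ j * w) = monomial α ζ * (w : ℂ) ^ α.degree := by
  simp only [monomial, Circle.coe_mul, mul_pow, Finsupp.prod_mul]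
  rw [Finsupp.prod, Finsupp.prod, Finset.prod_pow_eq_pow_sum, Finsupp.degree_apply]

theorem exists_circle_zpow_eq_neg_one {m : ℤ} (hm : m ≠ 0) : ∃ w : Circle, w ^ m = -1 := by
  refine ⟨Circle.exp (Real.pi / m), ?_⟩
  rw [← Circle.exp_intCast_mul, mul_div_cancel₀ _ (Int.cast_ne_zero.2 hm)]
  ext
  simp [Circle.coe_exp, exp_pi_mul_I]

theorem pairing_monomial (α β : ℕ →₀ ℕ) :
    pairing (monomial α) (monomial β) = if α = β then 1 else 0 := by
  split_ifs with h
  · subst h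
    simp [pairing, mul_conj, normSq_eq_norm_sq, norm_monomial]
  · obtain ⟨k, hk⟩ : ∃ k, α k ≠ β k := by
      by_contra! h'
      exact h (Finsupp.ext h')
    obtain ⟨w, hw⟩ := exists_circle_zpow_eq_neg_one (m := α k - β k) (by omega)
    -- translating the `k`-th coordinate by `w` multiplies the integrand by `w ^ (α k - β k) = -1`
    refine integral_eq_zero_of_mul_left_eq_neg (g := Function.update 1 k w) fun z => ?_
    have hchar : monomial α (Function.update 1 k w) * conj (monomial β (Function.update 1 k w))
        = -1 := by
      rw [monomial_update_one, monomial_update_one, ← Circle.coe_inv_eq_conj, ← Circle.coe_mul,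
        ← zpow_natCast, ← zpow_natCast, ← zpow_neg, ← zpow_add, ← sub_eq_add_neg, hw,
        Circle.coe_neg, Circle.coe_one]
    rw [monomial_mul, monomial_mul, map_mul]
    linear_combination (monomial α z * conj (monomial β z)) * hchar

theorem pairing_coordFn (i j : ℕ) : pairing (coordFn i) (coordFn j) = if i = j then 1 else 0 := by
  simp only [coordFn_eq_monomial, pairing_monomial, Finsupp.single_left_inj one_ne_zero]

section L2

variable {f g : Polytorus → ℂ}

theorem pairing_eq_inner (hf : MemLp f 2 muInf) (hg : MemLp g 2 muInf) :
    pairing f g = ⟪hg.toLp g, hf.toLp f⟫_ℂ := by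
  rw [L2.inner_def, pairing]
  refine integral_congr_ae ?_
  filter_upwards [hf.coeFn_toLp, hg.coeFn_toLp] with z hfz hgz
  rw [hfz, hgz, RCLike.inner_apply, mul_comm]

theorem orthonormal_coordFn : Orthonormal ℂ fun j => (memℒp_coordFn j).toLp (coordFn j) := by
  rw [orthonormal_iff_ite]
  intro i j
  rw [← pairing_eq_inner, pairing_coordFn]
  exact if_congr eq_comm rfl rfl

theorem summable_smul_coordFn {c : ℕ → ℂ} (hc : Summable fun j => ‖c j‖ ^ 2) :
    Summable fun j => c j • (memℒp_coordFn j).toLp (coordFn j) := by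
  have := orthonormal_coordFn.orthogonalFamily.summable_iff_norm_sq_summable c
  simp only [LinearIsometry.toSpanSingleton_apply] at this
  exact this.2 (by simpa using hc)

theorem hasSum_pairing_linearFn {c : ℕ → ℂ} (hc : Summable fun j => ‖c j‖ ^ 2)
    (hg : MemLp g 2 muInf) :
    HasSum (fun j => conj (c j) * pairing g (coordFn j)) (pairing g (linearFn c)) := by
  have h := (summable_smul_coordFn hc).hasSum.mapL (innerSLFlip ℂ (hg.toLp g))
  simp only [innerSLFlip_apply_apply, inner_smul_left] at h
  simp only [pairing_eq_inner hg (memℒp_coordFn _), pairing_eq_inner hg (Lp.memLp _),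
    Lp.toLp_coeFn, linearFn]
  exact h

theorem pairing_coordFn_linearFn {c : ℕ → ℂ} (hc : Summable fun j => ‖c j‖ ^ 2) (j : ℕ) :
    pairing (coordFn j) (linearFn c) = conj (c j) := by
  refine ((hasSum_pairing_linearFn hc (memℒp_coordFn j)).unique
    (hasSum_single j fun k hk => ?_)).trans ?_
  · simp [pairing_coordFn, Ne.symm hk]
  · simp [pairing_coordFn]

end L2

theorem pairing_add {f₁ f₂ h : Polytorus → ℂ} (hf₁ : Continuous f₁) (hf₂ : Continuous f₂)
    (hh : Continuous h) : pairing (f₁ + f₂) h = pairing f₁ h + pairing f₂ h := by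
  have hint : ∀ {f : Polytorus → ℂ}, Continuous f → Integrable (fun z => f z * conj (h z)) muInf :=
    fun hf => (hf.mul (continuous_conj.comp hh)).integrable_of_hasCompactSupport
      (.of_compactSpace _)
  simp only [pairing, Pi.add_apply, add_mul]
  exact integral_add (hint hf₁) (hint hf₂)

theorem pairing_smul (a : ℂ) (f h : Polytorus → ℂ) : pairing (a • f) h = a * pairing f h := by
  simp only [pairing, Pi.smul_apply, smul_eq_mul, mul_assoc]
  exact integral_const_mul a _

theorem norm_pairing_coordFn_le {f : Polytorus → ℂ} {C : ℝ} (hf : ∀ z, ‖f z‖ ≤ C) (j : ℕ) :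
    ‖pairing f (coordFn j)‖ ≤ C := by
  calc ‖pairing f (coordFn j)‖ ≤ C * (muInf Set.univ).toReal :=
        norm_integral_le_of_norm_le_const (Eventually.of_forall fun z => by
          simpa [coordFn, Circle.norm_coe] using hf z)
    _ = C := by simp

theorem IsAnalyticPoly.continuous {g : Polytorus → ℂ} (hg : IsAnalyticPoly g) : Continuous g := by
  induction hg using Submodule.span_induction with
  | mem _ h => obtain ⟨α, rfl⟩ := h; exact continuous_monomial α
  | zero => exact continuous_const
  | add _ _ _ _ hx hy => exact hx.add hy
  | smul a _ _ hx => exact hx.const_smul a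

theorem isAnalyticPoly_coordFn (j : ℕ) : IsAnalyticPoly (coordFn j) :=
  coordFn_eq_monomial j ▸ Submodule.subset_span ⟨_, rfl⟩

theorem coordFn_ne_zero (j : ℕ) : coordFn j ≠ 0 :=
  fun h => by simpa [coordFn] using congrFun h 1

theorem eLpNorm_coordFn_top (j : ℕ) : eLpNorm (coordFn j) ⊤ muInf = 1 := by
  have : eLpNorm (coordFn j) ⊤ muInf = eLpNorm (fun _ => (1 : ℂ)) ⊤ muInf :=
    eLpNorm_congr_norm_ae (Eventually.of_forall fun z => by simp [coordFn, Circle.norm_coe])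
  rw [this, eLpNorm_exponent_top, eLpNormEssSup_const _ (NeZero.ne muInf), enorm_one]

theorem hasSum_pairing_monomial_coordFn (α : ℕ →₀ ℕ) (ζ : Polytorus) :
    HasSum (fun j => ζ j * pairing (monomial α) (coordFn j))
      (pairing (fun z => monomial α fun j => ζ j * z 0) (coordFn 0)) := by
  have hvalue : pairing (fun z => monomial α fun j => ζ j * z 0) (coordFn 0)
      = monomial α ζ * if α.degree = 1 then 1 else 0 := by
    have hfun : (fun z => monomial α fun j => ζ j * z 0)
        = monomial α ζ • monomial (Finsupp.single 0 α.degree) := by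
      ext z
      simp [monomial_mul_const, monomial_single]
    simp only [hfun, pairing_smul, coordFn_eq_monomial, pairing_monomial,
      (Finsupp.single_injective 0).eq_iff]
  rw [hvalue]
  simp only [coordFn_eq_monomial, pairing_monomial]
  by_cases hdeg : α.degree = 1
  · obtain ⟨j₀, rfl⟩ := (Finsupp.sum_eq_one_iff α).1 hdeg
    refine (hasSum_single j₀ fun j hj => ?_).trans_eq ?_
    · simp [Finsupp.single_left_inj one_ne_zero, Ne.symm hj]
    · simp [monomial_single]
  · convert hasSum_zero with j
    · have : α ≠ Finsupp.single j 1 := by rintro rfl; exact hdeg (Finsupp.degree_single j 1)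
      simp [this]
    · simp [hdeg]

/-- The right-hand side is the first Taylor coefficient of `g` restricted to the rotated diagonal
`w ↦ (ζ j * w)_j`, with the integral over the circle written as an integral over `𝕋^∞` of a
function of `z 0`. -/
theorem IsAnalyticPoly.hasSum_pairing_coordFn {g : Polytorus → ℂ} (hg : IsAnalyticPoly g)
    (ζ : Polytorus) :
    HasSum (fun j => ζ j * pairing g (coordFn j))
      (pairing (fun z => g fun j => ζ j * z 0) (coordFn 0)) := by
  have hdiag : Continuous fun z : Polytorus => (fun j => ζ j * z 0 : Polytorus) := by fun_prop
  induction hg using Submodule.span_induction with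
  | mem _ h => obtain ⟨α, rfl⟩ := h; exact hasSum_pairing_monomial_coordFn α ζ
  | zero => simp [pairing]
  | add x y hx hy hxs hys =>
    have hxc := IsAnalyticPoly.continuous hx
    have hyc := IsAnalyticPoly.continuous hy
    simp only [pairing_add hxc hyc (continuous_coordFn _), mul_add]
    exact (pairing_add (hxc.comp hdiag) (hyc.comp hdiag) (continuous_coordFn 0)) ▸ hxs.add hys
  | smul a x _ hxs =>
    simp only [pairing_smul, mul_left_comm _ a]
    exact (pairing_smul a (fun z => x fun j => ζ j * z 0) _) ▸ hxs.mul_left a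

theorem IsAnalyticPoly.exists_hasSum_norm_pairing_coordFn_le {g : Polytorus → ℂ}
    (hg : IsAnalyticPoly g) :
    ∃ s, HasSum (fun j => ‖pairing g (coordFn j)‖) s ∧ s ≤ (eLpNorm g ⊤ muInf).toReal := by
  set ζ : Polytorus := fun j => Circle.exp (-arg (pairing g (coordFn j)))
  have hrot : ∀ j, (ζ j : ℂ) * pairing g (coordFn j) = ‖pairing g (coordFn j)‖ := fun j => by
    conv_lhs => arg 2; rw [← norm_mul_exp_arg_mul_I (pairing g (coordFn j))]
    rw [Circle.coe_exp, mul_left_comm, ← Complex.exp_add]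
    simp
  have hsum := hg.hasSum_pairing_coordFn ζ
  simp only [hrot] at hsum
  refine ⟨_, Complex.hasSum_re hsum, (re_le_norm _).trans (norm_pairing_coordFn_le
    (fun z => norm_le_toReal_eLpNorm_top_of_continuous hg.continuous _) 0)⟩

theorem bddAbove_range_norm_of_summable_sq {E : Type*} [SeminormedAddCommGroup E] {c : ℕ → E}
    (hc : Summable fun j => ‖c j‖ ^ 2) : BddAbove (Set.range fun j => ‖c j‖) :=
  ⟨√(∑' j, ‖c j‖ ^ 2), Set.forall_mem_range.2 fun j =>
    Real.le_sqrt_of_sq_le (hc.le_tsum j fun _ _ => sq_nonneg _)⟩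

theorem IsAnalyticPoly.norm_pairing_linearFn_le {g : Polytorus → ℂ} (hg : IsAnalyticPoly g)
    {c : ℕ → ℂ} (hc : Summable fun j => ‖c j‖ ^ 2) :
    ‖pairing g (linearFn c)‖ ≤ (⨆ j, ‖c j‖) * (eLpNorm g ⊤ muInf).toReal := by
  obtain ⟨s, hs, hsg⟩ := hg.exists_hasSum_norm_pairing_coordFn_le
  have hcS : ∀ j, ‖c j‖ ≤ ⨆ j, ‖c j‖ := le_ciSup (bddAbove_range_norm_of_summable_sq hc)
  have hP := hasSum_pairing_linearFn hc
    (hg.continuous.memLp_of_hasCompactSupport (.of_compactSpace g))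
  calc ‖pairing g (linearFn c)‖ ≤ (⨆ j, ‖c j‖) * s :=
        hP.norm_le_of_bounded (hs.mul_left _) fun j => by
          rw [norm_mul, RCLike.norm_conj]
          exact mul_le_mul_of_nonneg_right (hcS j) (norm_nonneg _)
    _ ≤ (⨆ j, ‖c j‖) * (eLpNorm g ⊤ muInf).toReal :=
        mul_le_mul_of_nonneg_left hsg (Real.iSup_nonneg fun j => norm_nonneg _)

/-- `‖f‖_{(H^∞)^*} = sup_j |c_j|` for linear functions `f = Σ c_j z_j`. -/
theorem dual_norm_inf_linear (c : ℕ → ℂ) (hc : Summable fun j => ‖c j‖ ^ 2) :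
    dualNormInf (⇑(linearFn c)) = ⨆ j, ‖c j‖ := by
  have hcoord : ∀ j, ‖pairing (coordFn j) (linearFn c)‖ / (eLpNorm (coordFn j) ⊤ muInf).toReal
      = ‖c j‖ := fun j => by
    rw [pairing_coordFn_linearFn hc, eLpNorm_coordFn_top, RCLike.norm_conj, ENNReal.toReal_one,
      div_one]
  refine IsLUB.csSup_eq ⟨?_, fun b hb => ciSup_le fun j => ?_⟩
    ⟨_, coordFn 0, isAnalyticPoly_coordFn 0, coordFn_ne_zero 0, rfl⟩
  · rintro _ ⟨g, hg, -, rfl⟩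
    exact div_le_of_le_mul₀ ENNReal.toReal_nonneg (Real.iSup_nonneg fun j => norm_nonneg _)
      (hg.norm_pairing_linearFn_le hc)
  · exact hcoord j ▸ hb ⟨coordFn j, isAnalyticPoly_coordFn j, coordFn_ne_zero j, rfl⟩
end

section
/- Let 1 ≤ p < ∞, let d ≥ 1, and let c_1, …, c_d be complex numbers. Then |c_1 + c_2 + ⋯ + c_d| · ‖z_1 + z_2 + ⋯ + z_d‖_{L^p(𝕋^d)} ≤ d · ‖c_1 z_1 + c_2 z_2 + ⋯ + c_d z_d‖_{L^p(𝕋^d)}. -/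
open MeasureTheory Complex Filter
open scoped ENNReal NNReal

/-- The normalized Lebesgue arc measure on the unit circle, i.e. its Haar probability
measure. -/
noncomputable def muCircle : Measure Circle := Measure.haarMeasure ⊤

instance : IsProbabilityMeasure muCircle :=
  ⟨by simpa [muCircle] using
    Measure.haarMeasure_self (K₀ := (⊤ : TopologicalSpace.PositiveCompacts Circle))⟩

/-- The probability measure `μ_d` on `𝕋^d`: the product of normalized Lebesgue arc
measures. -/
noncomputable def muD (d : ℕ) : Measure (Fin d → Circle) := Measure.pi fun _ => muCircle

/-!
Average over the shifts of the indices: `∑ₖ ∑ⱼ cⱼ z_{j+k} = (∑ⱼ cⱼ)(∑ⱼ zⱼ)`, and each shifted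
form `z ↦ ∑ⱼ cⱼ z_{j+k}` has the same `Lᵖ` norm as `z ↦ ∑ⱼ cⱼ zⱼ`, because permuting
coordinates preserves the product measure. Minkowski's inequality over the `d` shifts gives
the bound.
-/

section

variable {ι X : Type*} [Fintype ι] [MeasurableSpace X] (ν : Measure X) [SigmaFinite ν]

theorem measurePreserving_comp_perm (e : Equiv.Perm ι) :
    MeasurePreserving (fun z : ι → X => z ∘ e)
      (Measure.pi fun _ => ν) (Measure.pi fun _ => ν) := by
  convert measurePreserving_piCongrLeft (fun _ : ι => ν) e.symm using 1
  ext z i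
  simp [MeasurableEquiv.coe_piCongrLeft, Equiv.piCongrLeft_apply]

end

section

variable {G X 𝕜 E : Type*} [Fintype G] [AddGroup G]

theorem sum_sum_smul_comp_add_right [Semiring 𝕜] [AddCommMonoid E] [Module 𝕜 E]
    (c : G → 𝕜) (x : G → E) :
    ∑ k, ∑ j, c j • x (j + k) = (∑ j, c j) • ∑ j, x j := by
  rw [Finset.sum_comm, Finset.sum_smul]
  refine Finset.sum_congr rfl fun j _ => ?_
  rw [← Finset.smul_sum]
  exact congrArg (c j • ·) (Equiv.sum_comp (Equiv.addLeft j) x)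

variable [MeasurableSpace X] {ν : Measure X} [SigmaFinite ν]
  [NormedField 𝕜] [NormedAddCommGroup E] [NormedSpace 𝕜 E]

theorem enorm_sum_mul_eLpNorm_sum_le {p : ℝ≥0∞} (hp : 1 ≤ p) (c : G → 𝕜) {u : X → E}
    (hu : StronglyMeasurable u) :
    ‖∑ j, c j‖ₑ * eLpNorm (fun z : G → X => ∑ j, u (z j)) p (Measure.pi fun _ => ν)
      ≤ Fintype.card G * eLpNorm (fun z => ∑ j, c j • u (z j)) p (Measure.pi fun _ => ν) := by
  set μ := Measure.pi fun _ : G => ν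
  set f : (G → X) → E := fun z => ∑ j, c j • u (z j)
  have hf : StronglyMeasurable f := Finset.stronglyMeasurable_fun_sum _ fun j _ =>
    (hu.comp_measurable (measurable_pi_apply j)).const_smul _
  have hshift (k : G) : MeasurePreserving (· ∘ Equiv.addRight k) μ μ :=
    measurePreserving_comp_perm ν _
  have hsum : (∑ j, c j) • (fun z : G → X => ∑ j, u (z j))
      = ∑ k, f ∘ (· ∘ Equiv.addRight k) := by
    ext z
    simp only [Pi.smul_apply, Finset.sum_apply, Function.comp_apply, Equiv.coe_addRight, f]
    exact (sum_sum_smul_comp_add_right c _).symm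
  calc ‖∑ j, c j‖ₑ * eLpNorm (fun z : G → X => ∑ j, u (z j)) p μ
      = eLpNorm (∑ k, f ∘ (· ∘ Equiv.addRight k)) p μ := by
        rw [← hsum, eLpNorm_const_smul]
    _ ≤ ∑ k, eLpNorm (f ∘ (· ∘ Equiv.addRight k)) p μ :=
        eLpNorm_sum_le (fun k _ =>
          (hf.comp_measurable (hshift k).measurable).aestronglyMeasurable) hp
    _ = Fintype.card G * eLpNorm f p μ := by
        simp only [eLpNorm_comp_measurePreserving hf.aestronglyMeasurable (hshift _),
          Finset.sum_const, Finset.card_univ, nsmul_eq_mul]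

end

theorem toReal_eLpNorm_ofReal {α E : Type*} [MeasurableSpace α] {μ : Measure α}
    [NormedAddCommGroup E] {f : α → E} {p : ℝ} (hp : 0 < p) (hf : AEStronglyMeasurable f μ) :
    (eLpNorm f (ENNReal.ofReal p) μ).toReal = (∫ x, ‖f x‖ ^ p ∂μ) ^ (1 / p) := by
  rw [toReal_eLpNorm hf, lpNorm_eq_integral_norm_rpow_toReal (by simpa) ENNReal.ofReal_ne_top hf,
    ENNReal.toReal_ofReal hp.le, one_div]

theorem sum_coeff_mul_lp_le_general (p : ℝ) (hp : 1 ≤ p) (d : ℕ) (c : Fin d → ℂ) :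
    ‖∑ j, c j‖ * (∫ z : Fin d → Circle, ‖∑ j, (z j : ℂ)‖ ^ p ∂muD d) ^ (1 / p)
      ≤ d * (∫ z : Fin d → Circle, ‖∑ j, c j * (z j : ℂ)‖ ^ p ∂muD d) ^ (1 / p) := by
  obtain _ | d := d
  · simp
  have hp0 : 0 < p := by linarith
  have hcoe : StronglyMeasurable fun z : Circle => (z : ℂ) :=
    Continuous.stronglyMeasurable (by fun_prop)
  have hmem : MemLp (fun z => ∑ j, c j • (z j : ℂ)) (.ofReal p) (Measure.pi fun _ => muCircle) :=
    Continuous.memLp_of_hasCompactSupport (by fun_prop) (.of_compactSpace _)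
  have key := ENNReal.toReal_mono
    (ENNReal.mul_ne_top (ENNReal.natCast_ne_top _) hmem.eLpNorm_ne_top)
    (enorm_sum_mul_eLpNorm_sum_le (ν := muCircle) (ENNReal.one_le_ofReal.2 hp) c hcoe)
  rw [ENNReal.toReal_mul, ENNReal.toReal_mul, toReal_enorm, ENNReal.toReal_natCast,
    toReal_eLpNorm_ofReal hp0 hmem.aestronglyMeasurable,
    toReal_eLpNorm_ofReal hp0 (Continuous.aestronglyMeasurable (by fun_prop))] at key
  simpa [muD] using key

/-- `|c_1 + ⋯ + c_d| ‖z_1 + ⋯ + z_d‖_{L^p(𝕋^d)} ≤ d ‖Σ c_j z_j‖_{L^p(𝕋^d)}`. -/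
theorem sum_coeff_mul_lp_le (p : ℝ) (hp : 1 ≤ p) (d : ℕ) (hd : 1 ≤ d) (c : Fin d → ℂ) :
    ‖∑ j, c j‖ * (∫ z : Fin d → Circle, ‖∑ j, (z j : ℂ)‖ ^ p ∂muD d) ^ (1 / p)
      ≤ d * (∫ z : Fin d → Circle, ‖∑ j, c j * (z j : ℂ)‖ ^ p ∂muD d) ^ (1 / p) :=
  sum_coeff_mul_lp_le_general p hp d c
end

section
/- Let p > 0 be a real number and let k ∈ ℤ. Then (1/2π) ∫_{-π}^{π} |1 + e^{iθ}|^{p-2} (1 + e^{iθ}) e^{-ikθ} dθ = Γ(p) · (1/Γ(p/2 + 1 - k)) · (1/Γ(p/2 + k)), where 1/Γ denotes the reciprocal Gamma function, taken to be 0 at nonpositive integers. Equivalently, the left-hand side equals 1/(p · B((p + 2 - 2k)/2, (p + 2k)/2)) where B is the Beta function, whenever both Beta arguments are positive. -/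
/-!
Since `1 + e^{iθ} = 2 cos(θ/2) e^{iθ/2}`, on `(-π, π)` the integrand is
`(2 cos(θ/2))^{p-1} e^{i(1/2-k)θ}`; call its integral `J_k`. The derivative of
`(2 cos(θ/2))^p e^{-ikθ}`, which vanishes at `±π`, is a combination of the integrands of `J_k` and
`J_{k+1}`, whence `(p/2 - k) J_k = (p/2 + k) J_{k+1}`: the recurrence that `Γ(x + 1) = x Γ(x)`
gives for the right-hand side. It remains to check `k = 0`. There `J_0 = J_1` and
`J_0 + J_1 = ∫ (2 cos(θ/2))^p`, which the substitution `x = (1 + sin(θ/2))/2`, with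
`x(1 - x) = cos²(θ/2)/4`, turns into `2·4^p B((p+1)/2, (p+1)/2)`, evaluated by Legendre's
duplication formula.
-/

open Complex

open MeasureTheory Set Real intervalIntegral

theorem Int.eq_of_recurrence {K : Type*} [Field K] {u v α β : ℤ → K}
    (hu : ∀ k, α k * u k = β k * u (k + 1)) (hv : ∀ k, α k * v k = β k * v (k + 1))
    (hα : ∀ k < 0, α k ≠ 0) (hβ : ∀ k, 0 ≤ k → β k ≠ 0) (h₀ : u 0 = v 0) (k : ℤ) :
    u k = v k := by
  induction k using Int.induction_on with
  | zero => exact h₀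
  | succ i ih =>
    refine mul_left_cancel₀ (hβ i (by positivity)) ?_
    rw [← hu, ← hv, ih]
  | pred i ih =>
    refine mul_left_cancel₀ (hα (-i - 1) (by omega)) ?_
    rw [hu, hv, sub_add_cancel, ih]

-- Also at the poles, where `Real.Gamma` is `0` and so is its inverse.
lemma Real.inv_Gamma_eq_mul_inv_Gamma_add_one (x : ℝ) : (Gamma x)⁻¹ = x * (Gamma (x + 1))⁻¹ := by
  rcases eq_or_ne x 0 with rfl | hx
  · simp
  · rw [Gamma_add_one hx, mul_inv, ← mul_assoc, mul_inv_cancel₀ hx, one_mul]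

lemma Real.Gamma_ratio_recurrence (p x : ℝ) :
    (p / 2 - x) * (Real.Gamma p * (Real.Gamma (p / 2 + 1 - x))⁻¹ * (Real.Gamma (p / 2 + x))⁻¹)
      = (p / 2 + x) * (Real.Gamma p * (Real.Gamma (p / 2 + 1 - (x + 1)))⁻¹
          * (Real.Gamma (p / 2 + (x + 1)))⁻¹) := by
  have h₁ := Real.inv_Gamma_eq_mul_inv_Gamma_add_one (p / 2 - x)
  have h₂ := Real.inv_Gamma_eq_mul_inv_Gamma_add_one (p / 2 + x)
  rw [show p / 2 - x + 1 = p / 2 + 1 - x by ring] at h₁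
  rw [show p / 2 + x + 1 = p / 2 + (x + 1) by ring] at h₂
  rw [show p / 2 + 1 - (x + 1) = p / 2 - x by ring, h₁, h₂]
  ring

lemma ofReal_rpow_mul_one_sub_rpow {x : ℝ} (hx : x ∈ Icc (0 : ℝ) 1) (a b : ℝ) :
    ((x ^ (a - 1) * (1 - x) ^ (b - 1) : ℝ) : ℂ)
      = (x : ℂ) ^ ((a : ℂ) - 1) * (1 - (x : ℂ)) ^ ((b : ℂ) - 1) := by
  push_cast [ofReal_cpow hx.1, ofReal_cpow (sub_nonneg.2 hx.2)]
  rfl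

lemma intervalIntegrable_rpow_mul_one_sub_rpow {a b : ℝ} (ha : 0 < a) (hb : 0 < b) :
    IntervalIntegrable (fun x : ℝ => x ^ (a - 1) * (1 - x) ^ (b - 1)) volume 0 1 := by
  refine (betaIntegral_convergent (u := a) (v := b) (by simpa) (by simpa)).norm.congr ?_
  intro x hx
  rw [uIoc_of_le (zero_le_one (α := ℝ))] at hx
  dsimp only
  rw [← ofReal_rpow_mul_one_sub_rpow (Ioc_subset_Icc_self hx), norm_real, norm_of_nonneg]
  exact mul_nonneg (rpow_nonneg hx.1.le _) (rpow_nonneg (sub_nonneg.2 hx.2) _)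

lemma integral_rpow_mul_one_sub_rpow {a b : ℝ} (ha : 0 < a) (hb : 0 < b) :
    ∫ x in (0 : ℝ)..1, x ^ (a - 1) * (1 - x) ^ (b - 1) = ProbabilityTheory.beta a b := by
  have h : ((∫ x in (0 : ℝ)..1, x ^ (a - 1) * (1 - x) ^ (b - 1) : ℝ) : ℂ) = betaIntegral a b := by
    rw [← integral_ofReal, betaIntegral]
    refine integral_congr fun x hx => ?_
    rw [uIcc_of_le (zero_le_one (α := ℝ))] at hx
    exact ofReal_rpow_mul_one_sub_rpow hx a b
  rw [ProbabilityTheory.beta_eq_betaIntegralReal a b ha hb, ← h, ofReal_re]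

lemma cos_half_nonneg {θ : ℝ} (hθ : θ ∈ Icc (-π) π) : 0 ≤ Real.cos (θ / 2) :=
  cos_nonneg_of_mem_Icc ⟨by linarith [hθ.1], by linarith [hθ.2]⟩

lemma cos_half_pos {θ : ℝ} (hθ : θ ∈ Ioo (-π) π) : 0 < Real.cos (θ / 2) :=
  cos_pos_of_mem_Ioo ⟨by linarith [hθ.1], by linarith [hθ.2]⟩

noncomputable def betaChart (θ : ℝ) : ℝ := (1 + Real.sin (θ / 2)) / 2

lemma hasDerivAt_betaChart (θ : ℝ) : HasDerivAt betaChart (Real.cos (θ / 2) / 4) θ := by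
  have := (((hasDerivAt_id θ).div_const 2).sin.const_add 1).div_const 2
  exact this.congr_deriv (by simp only [id]; ring)

lemma betaChart_mul_one_sub (θ : ℝ) :
    betaChart θ * (1 - betaChart θ) = (Real.cos (θ / 2) / 2) ^ 2 := by
  unfold betaChart
  linear_combination (-1 / 4 : ℝ) * Real.sin_sq_add_cos_sq (θ / 2)

lemma injOn_betaChart : InjOn betaChart (Icc (-π) π) := by
  intro θ₁ h₁ θ₂ h₂ h
  have : θ₁ / 2 = θ₂ / 2 := injOn_sin ⟨by linarith [h₁.1], by linarith [h₁.2]⟩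
    ⟨by linarith [h₂.1], by linarith [h₂.2]⟩ (by unfold betaChart at h; linarith)
  linarith

lemma image_betaChart_Icc : betaChart '' Icc (-π) π = Icc 0 1 := by
  ext x
  constructor
  · rintro ⟨θ, -, rfl⟩
    unfold betaChart
    constructor <;> linarith [neg_one_le_sin (θ / 2), sin_le_one (θ / 2)]
  · rintro ⟨h₀, h₁⟩
    refine ⟨2 * arcsin (2 * x - 1), ⟨?_, ?_⟩, ?_⟩
    · linarith [neg_pi_div_two_le_arcsin (2 * x - 1)]
    · linarith [arcsin_le_pi_div_two (2 * x - 1)]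
    · unfold betaChart
      rw [mul_div_cancel_left₀ _ two_ne_zero, sin_arcsin (by linarith) (by linarith)]
      ring

lemma abs_deriv_betaChart_smul {F : Type*} [NormedAddCommGroup F] [NormedSpace ℝ F]
    (g : ℝ → F) : EqOn (fun θ => |Real.cos (θ / 2) / 4| • g (betaChart θ))
      (fun θ => (Real.cos (θ / 2) / 4) • g (betaChart θ)) (Icc (-π) π) := fun θ hθ => by
  simp only [abs_of_nonneg (div_nonneg (cos_half_nonneg hθ) zero_le_four)]

lemma integrableOn_betaChart_iff {F : Type*} [NormedAddCommGroup F] [NormedSpace ℝ F]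
    (g : ℝ → F) : IntegrableOn (fun θ => (Real.cos (θ / 2) / 4) • g (betaChart θ)) (Icc (-π) π)
      ↔ IntegrableOn g (Icc 0 1) := by
  rw [← image_betaChart_Icc, integrableOn_image_iff_integrableOn_abs_deriv_smul measurableSet_Icc
    (fun θ _ => (hasDerivAt_betaChart θ).hasDerivWithinAt) injOn_betaChart,
    integrableOn_congr_fun (abs_deriv_betaChart_smul g) measurableSet_Icc]

lemma setIntegral_betaChart {F : Type*} [NormedAddCommGroup F] [NormedSpace ℝ F]
    (g : ℝ → F) : ∫ θ in Icc (-π) π, (Real.cos (θ / 2) / 4) • g (betaChart θ)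
      = ∫ x in Icc 0 1, g x := by
  rw [← image_betaChart_Icc, integral_image_eq_integral_abs_deriv_smul measurableSet_Icc
    (fun θ _ => (hasDerivAt_betaChart θ).hasDerivWithinAt) injOn_betaChart,
    setIntegral_congr_fun measurableSet_Icc (abs_deriv_betaChart_smul g)]

lemma betaChart_rpow_mul_one_sub_rpow {θ : ℝ} (hθ : θ ∈ Ioo (-π) π) (r : ℝ) :
    2 * 4 ^ r * ((Real.cos (θ / 2) / 4) •
      (betaChart θ ^ ((r + 1) / 2 - 1) * (1 - betaChart θ) ^ ((r + 1) / 2 - 1)))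
      = (2 * Real.cos (θ / 2)) ^ r := by
  have hc := cos_half_pos hθ
  have hx : 0 ≤ betaChart θ := by
    unfold betaChart; linarith [neg_one_le_sin (θ / 2)]
  have h1x : 0 ≤ 1 - betaChart θ := by
    unfold betaChart; linarith [sin_le_one (θ / 2)]
  rw [smul_eq_mul, ← mul_rpow hx h1x, betaChart_mul_one_sub, ← rpow_natCast,
    ← rpow_mul (by positivity), show (2 * Real.cos (θ / 2)) = 4 * (Real.cos (θ / 2) / 2) by ring,
    mul_rpow zero_le_four (by positivity), Nat.cast_ofNat,
    show (2 : ℝ) * ((r + 1) / 2 - 1) = r - 1 by ring, rpow_sub_one (by positivity)]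
  field_simp
  ring

theorem intervalIntegrable_two_cos_half_rpow {r : ℝ} (hr : -1 < r) :
    IntervalIntegrable (fun θ => (2 * Real.cos (θ / 2)) ^ r) volume (-π) π := by
  have hbeta := (intervalIntegrable_rpow_mul_one_sub_rpow (a := (r + 1) / 2) (b := (r + 1) / 2)
    (by linarith) (by linarith)).1
  rw [← integrableOn_Icc_iff_integrableOn_Ioc, ← integrableOn_betaChart_iff] at hbeta
  rw [intervalIntegrable_iff_integrableOn_Ioo_of_le (by linarith [pi_pos])]
  exact IntegrableOn.congr_fun ((hbeta.mono_set Ioo_subset_Icc_self).const_mul (2 * 4 ^ r))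
    (fun θ hθ => betaChart_rpow_mul_one_sub_rpow hθ r) measurableSet_Ioo

theorem integral_two_cos_half_rpow {r : ℝ} (hr : -1 < r) :
    ∫ θ in -π..π, (2 * Real.cos (θ / 2)) ^ r
      = 2 * 4 ^ r * ProbabilityTheory.beta ((r + 1) / 2) ((r + 1) / 2) := by
  calc ∫ θ in -π..π, (2 * Real.cos (θ / 2)) ^ r
      = ∫ θ in Ioo (-π) π, 2 * 4 ^ r * ((Real.cos (θ / 2) / 4) •
          (betaChart θ ^ ((r + 1) / 2 - 1) * (1 - betaChart θ) ^ ((r + 1) / 2 - 1))) := by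
        rw [integral_of_le (by linarith [pi_pos]), integral_Ioc_eq_integral_Ioo]
        exact setIntegral_congr_fun measurableSet_Ioo
          (fun θ hθ => (betaChart_rpow_mul_one_sub_rpow hθ r).symm)
    _ = 2 * 4 ^ r * ∫ x in (0 : ℝ)..1, x ^ ((r + 1) / 2 - 1) * (1 - x) ^ ((r + 1) / 2 - 1) := by
        rw [MeasureTheory.integral_const_mul, ← integral_Icc_eq_integral_Ioo,
          setIntegral_betaChart fun x => x ^ ((r + 1) / 2 - 1) * (1 - x) ^ ((r + 1) / 2 - 1),
          integral_of_le zero_le_one, integral_Icc_eq_integral_Ioc]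
    _ = _ := by rw [integral_rpow_mul_one_sub_rpow (by linarith) (by linarith)]

noncomputable def cosHalfKernel (p b θ : ℝ) : ℂ :=
  ((2 * Real.cos (θ / 2)) ^ (p - 1) : ℝ) * exp (b * θ * I)

noncomputable def cosHalfMoment (p b : ℝ) : ℂ := ∫ θ in -π..π, cosHalfKernel p b θ

lemma intervalIntegrable_cosHalfKernel {p : ℝ} (hp : 0 < p) (b : ℝ) :
    IntervalIntegrable (cosHalfKernel p b) volume (-π) π := by
  have h := intervalIntegrable_two_cos_half_rpow (r := p - 1) (by linarith)
  exact IntervalIntegrable.mul_continuousOn ⟨h.1.ofReal, h.2.ofReal⟩ (by fun_prop)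

lemma cosHalfKernel_add (p b c θ : ℝ) : cosHalfKernel p (b + c) θ
    = cosHalfKernel p b θ * (Real.cos (c * θ) + Real.sin (c * θ) * I) := by
  rw [cosHalfKernel, cosHalfKernel, ofReal_cos, ofReal_sin, ← exp_mul_I,
    mul_assoc _ (Complex.exp _), ← Complex.exp_add]
  push_cast
  ring_nf

lemma hasDerivAt_two_cos_half_rpow (p : ℝ) {θ : ℝ} (hθ : 0 < Real.cos (θ / 2)) :
    HasDerivAt (fun θ => (2 * Real.cos (θ / 2)) ^ p)
      (-(p * (2 * Real.cos (θ / 2)) ^ (p - 1) * Real.sin (θ / 2))) θ := by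
  have h := (((hasDerivAt_id θ).div_const 2).cos.const_mul 2).rpow_const (p := p)
    (Or.inl (by simp only [id]; positivity))
  exact h.congr_deriv (by simp only [id]; ring)

lemma hasDerivAt_two_cos_half_rpow_mul_exp {p : ℝ} (b : ℝ) {θ : ℝ} (hθ : θ ∈ Ioo (-π) π) :
    HasDerivAt (fun θ : ℝ => (((2 * Real.cos (θ / 2)) ^ p : ℝ) : ℂ) * exp (b * θ * I))
      (I * (p / 2 + b) * cosHalfKernel p (b + 1 / 2) θ
        + I * (b - p / 2) * cosHalfKernel p (b - 1 / 2) θ) θ := by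
  have hc := cos_half_pos hθ
  have hexp : HasDerivAt (fun θ : ℝ => exp (b * θ * I)) (b * I * exp (b * θ * I)) θ := by
    have := ((ofRealCLM.hasDerivAt (x := θ)).const_mul (b : ℂ)).mul_const I
    simpa [mul_comm] using this.cexp
  refine ((hasDerivAt_two_cos_half_rpow p hc).ofReal_comp.mul hexp).congr_deriv ?_
  rw [sub_eq_add_neg b, cosHalfKernel_add, cosHalfKernel_add, neg_mul, Real.cos_neg,
    Real.sin_neg, one_div_mul_eq_div, cosHalfKernel, show p = (p - 1) + 1 by ring,
    rpow_add_one (by positivity), add_sub_cancel_right]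
  push_cast
  linear_combination (-p * ((2 * Real.cos (θ / 2)) ^ (p - 1) : ℝ) * Complex.sin (θ / 2)
    * exp (b * θ * I)) * I_sq

theorem cosHalfMoment_recurrence {p : ℝ} (hp : 0 < p) (b : ℝ) :
    ((p / 2 + b : ℝ) : ℂ) * cosHalfMoment p (b + 1 / 2)
      = ((p / 2 - b : ℝ) : ℂ) * cosHalfMoment p (b - 1 / 2) := by
  have hcont : ContinuousOn (fun θ : ℝ => (((2 * Real.cos (θ / 2)) ^ p : ℝ) : ℂ)
      * Complex.exp (b * θ * I)) (Icc (-π) π) :=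
    ((continuous_ofReal.comp ((continuous_const.mul (Real.continuous_cos.comp
      (continuous_id.div_const 2))).rpow_const fun _ => Or.inr hp.le)).mul
      (by fun_prop)).continuousOn
  have hftc := integral_eq_sub_of_hasDerivAt_of_le (by linarith [pi_pos]) hcont
    (fun θ hθ => hasDerivAt_two_cos_half_rpow_mul_exp b hθ)
    (((intervalIntegrable_cosHalfKernel hp _).const_mul _).add
      ((intervalIntegrable_cosHalfKernel hp _).const_mul _))
  rw [integral_add ((intervalIntegrable_cosHalfKernel hp _).const_mul _)
      ((intervalIntegrable_cosHalfKernel hp _).const_mul _),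
    intervalIntegral.integral_const_mul, intervalIntegral.integral_const_mul] at hftc
  simp only [neg_div, Real.cos_neg, Real.cos_pi_div_two, mul_zero, zero_rpow hp.ne', ofReal_zero,
    zero_mul, sub_zero] at hftc
  refine mul_left_cancel₀ I_ne_zero ?_
  unfold cosHalfMoment
  push_cast
  linear_combination hftc

lemma cosHalfMoment_neg_half {p : ℝ} (hp : 0 < p) :
    cosHalfMoment p (-(1 / 2)) = cosHalfMoment p (1 / 2) := by
  have h := cosHalfMoment_recurrence hp 0
  rw [zero_add, zero_sub, add_zero, sub_zero] at h
  exact (mul_left_cancel₀ (ofReal_ne_zero.2 (by positivity)) h).symm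

lemma cosHalfMoment_half_add_neg_half {p : ℝ} (hp : 0 < p) :
    cosHalfMoment p (1 / 2) + cosHalfMoment p (-(1 / 2))
      = ((∫ θ in -π..π, (2 * Real.cos (θ / 2)) ^ p : ℝ) : ℂ) := by
  rw [cosHalfMoment, cosHalfMoment, ← integral_add (intervalIntegrable_cosHalfKernel hp _)
    (intervalIntegrable_cosHalfKernel hp _), ← integral_ofReal]
  refine integral_congr fun θ hθ => ?_
  rw [uIcc_of_le (by linarith [pi_pos])] at hθ
  have h := cosHalfKernel_add p 0 (1 / 2) θ
  have h' := cosHalfKernel_add p 0 (-(1 / 2)) θ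
  rw [zero_add] at h h'
  have hpow : (2 * Real.cos (θ / 2)) ^ p = (2 * Real.cos (θ / 2)) ^ (p - 1) * (2 * Real.cos (θ / 2))
    := by rw [← rpow_add_one' (by linarith [cos_half_nonneg hθ]) (by simp [hp.ne']), sub_add_cancel]
  rw [h, h', hpow, neg_mul, Real.cos_neg, Real.sin_neg, one_div_mul_eq_div]
  simp only [cosHalfKernel, ofReal_zero, zero_mul, Complex.exp_zero, mul_one]
  push_cast
  ring

lemma four_rpow_mul_beta {p : ℝ} (hp : 0 < p) :
    4 ^ p * ProbabilityTheory.beta ((p + 1) / 2) ((p + 1) / 2)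
      = 2 * π * (Real.Gamma p * (Real.Gamma (p / 2 + 1))⁻¹ * (Real.Gamma (p / 2))⁻¹) := by
  have hdup := Real.Gamma_mul_Gamma_add_half (p / 2)
  rw [show p / 2 + 1 / 2 = (p + 1) / 2 by ring, show 2 * (p / 2) = p by ring] at hdup
  have h2 : (2 : ℝ) ^ (1 - p) * 2 ^ p = 2 := by rw [← rpow_add two_pos]; norm_num
  have h4 : (4 : ℝ) ^ p = 2 ^ p * 2 ^ p := by
    rw [show (4 : ℝ) = 2 * 2 by norm_num, mul_rpow zero_le_two zero_le_two]
  have hπ : √π * √π = π := mul_self_sqrt pi_pos.le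
  rw [ProbabilityTheory.beta, add_halves, Real.Gamma_add_one hp.ne',
    Real.Gamma_add_one (by positivity), h4]
  field_simp
  linear_combination (2 ^ p) ^ 2 * (Real.Gamma (p / 2) * Real.Gamma ((p + 1) / 2)
      + Real.Gamma p * 2 ^ (1 - p) * √π) * hdup
    + Real.Gamma p ^ 2 * √π ^ 2 * (2 ^ (1 - p) * 2 ^ p + 2) * h2 + 4 * Real.Gamma p ^ 2 * hπ

lemma cosHalfMoment_half {p : ℝ} (hp : 0 < p) : cosHalfMoment p (1 / 2)
    = ((2 * π * (Real.Gamma p * (Real.Gamma (p / 2 + 1))⁻¹ * (Real.Gamma (p / 2))⁻¹) : ℝ) : ℂ) := by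
  have h := cosHalfMoment_half_add_neg_half hp
  rw [cosHalfMoment_neg_half hp, integral_two_cos_half_rpow (by linarith), mul_assoc,
    four_rpow_mul_beta hp] at h
  push_cast at h ⊢
  linear_combination h / 2

lemma one_add_exp_mul_I (θ : ℝ) :
    1 + Complex.exp (θ * I) = ((2 * Real.cos (θ / 2) : ℝ) : ℂ) * Complex.exp ((θ / 2 : ℝ) * I) := by
  rw [show (θ : ℂ) * I = (θ / 2 : ℝ) * I + (θ / 2 : ℝ) * I by push_cast; ring, Complex.exp_add,
    Complex.exp_mul_I]
  push_cast
  linear_combination (-1 : ℂ) * Complex.cos_sq_add_sin_sq (θ / 2 : ℂ)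
    + Complex.sin (θ / 2 : ℂ) ^ 2 * I_sq

lemma norm_one_add_exp_mul_I (θ : ℝ) :
    ‖1 + Complex.exp (θ * I)‖ = |2 * Real.cos (θ / 2)| := by
  rw [one_add_exp_mul_I, norm_mul, norm_exp_ofReal_mul_I, mul_one, norm_real, Real.norm_eq_abs]

lemma norm_one_add_exp_rpow_mul {θ : ℝ} (hθ : θ ∈ Ioo (-π) π) (p k : ℝ) :
    ((‖1 + Complex.exp (θ * I)‖ ^ (p - 2) : ℝ) : ℂ) * (1 + Complex.exp (θ * I))
        * Complex.exp (-(k : ℂ) * θ * I) = cosHalfKernel p (1 / 2 - k) θ := by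
  have hc : 0 < 2 * Real.cos (θ / 2) := by linarith [cos_half_pos hθ]
  rw [norm_one_add_exp_mul_I, abs_of_pos hc, one_add_exp_mul_I, cosHalfKernel,
    show p - 1 = p - 2 + 1 by ring, rpow_add_one hc.ne']
  have he := Complex.exp_add ((θ / 2 : ℝ) * I) (-(k : ℂ) * θ * I)
  push_cast at he ⊢
  rw [show ((1 / 2 - k) : ℂ) * θ * I = θ / 2 * I + -k * θ * I by ring, he]
  ring

lemma integral_norm_one_add_exp_rpow_mul (p k : ℝ) :
    ∫ θ in -π..π, ((‖1 + Complex.exp (θ * I)‖ ^ (p - 2) : ℝ) : ℂ) * (1 + Complex.exp (θ * I))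
      * Complex.exp (-(k : ℂ) * θ * I) = cosHalfMoment p (1 / 2 - k) := by
  rw [cosHalfMoment, integral_of_le (by linarith [pi_pos]), integral_of_le (by linarith [pi_pos]),
    integral_Ioc_eq_integral_Ioo, integral_Ioc_eq_integral_Ioo]
  exact setIntegral_congr_fun measurableSet_Ioo fun θ hθ => norm_one_add_exp_rpow_mul hθ p k

lemma cosHalfMoment_one_half_sub_recurrence {p : ℝ} (hp : 0 < p) (x : ℝ) :
    ((p / 2 - x : ℝ) : ℂ) * cosHalfMoment p (1 / 2 - x)
      = ((p / 2 + x : ℝ) : ℂ) * cosHalfMoment p (1 / 2 - (x + 1)) := by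
  convert cosHalfMoment_recurrence hp (-x) using 3 <;> ring

/-- for `p > 0` and `k ∈ ℤ`,
`(1/2π) ∫_{-π}^{π} |1+e^{iθ}|^{p-2} (1+e^{iθ}) e^{-ikθ} dθ = Γ(p)/(Γ(p/2+1-k)Γ(p/2+k))`,
with the convention `1/Γ = 0` at nonpositive integers. -/
theorem integral_one_add_exp_pow (p : ℝ) (hp : 0 < p) (k : ℤ) :
    (1 / (2 * Real.pi) : ℝ) • ∫ θ in (-Real.pi)..Real.pi,
        ((‖1 + Complex.exp ((θ : ℂ) * Complex.I)‖ ^ (p - 2) : ℝ) : ℂ)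
          * (1 + Complex.exp ((θ : ℂ) * Complex.I))
          * Complex.exp (-(k : ℂ) * (θ : ℂ) * Complex.I)
      = ((Real.Gamma p * (Real.Gamma (p / 2 + 1 - k))⁻¹ * (Real.Gamma (p / 2 + k))⁻¹ : ℝ) : ℂ) := by
  have hJ := integral_norm_one_add_exp_rpow_mul p k
  push_cast at hJ
  rw [hJ]
  refine Int.eq_of_recurrence
    (u := fun j : ℤ => (1 / (2 * π) : ℝ) • cosHalfMoment p (1 / 2 - j))
    (v := fun j : ℤ =>
      ((Real.Gamma p * (Real.Gamma (p / 2 + 1 - j))⁻¹ * (Real.Gamma (p / 2 + j))⁻¹ : ℝ) : ℂ))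
    (α := fun j : ℤ => ((p / 2 - j : ℝ) : ℂ)) (β := fun j : ℤ => ((p / 2 + j : ℝ) : ℂ))
    (fun j => ?_) (fun j => ?_) (fun j hj => ?_) (fun j hj => ?_) ?_ k
  · simp only [real_smul, Int.cast_add, Int.cast_one]
    linear_combination ((1 / (2 * π) : ℝ) : ℂ) * cosHalfMoment_one_half_sub_recurrence hp j
  · exact_mod_cast Real.Gamma_ratio_recurrence p j
  · exact ofReal_ne_zero.2 (ne_of_gt (by linarith [show (j : ℝ) < 0 by exact_mod_cast hj]))
  · exact ofReal_ne_zero.2 (ne_of_gt (by linarith [show (0 : ℝ) ≤ j by exact_mod_cast hj]))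
  · rw [Int.cast_zero, sub_zero, add_zero, sub_zero, real_smul, cosHalfMoment_half hp, ← ofReal_mul,
      ← mul_assoc, one_div_mul_cancel (by positivity), one_mul]
end
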